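/- arXiv:2501.17364 — 4 statements merged into one kernel-verified Lean document; each statement's English description precedes it below -/
import Mathlib

section
/- (Mayer's lemma) Let x ∈ ℝ̃_ρ. The following are equivalent: (1) x is invertible in the ring ℝ̃_ρ and x ≥ 0; (2) every representative (x_ε) of x satisfies x_ε > 0 for all sufficiently small ε; (3) every representative (x_ε) satisfies: there exists m ∈ ℕ with x_ε > ρ_ε^m for ε small; (4) some representative (x_ε) satisfies: there exists m ∈ ℕ with x_ε > ρ_ε^m for ε small. -/
/-!
A representative bounded below by `ρ ^ m` has a moderate inverse, and every negligible net is
eventually below `ρ ^ m`; this gives (4) ⇒ (1). For (1) ⇒ (2): if `x * y ≈ 1` and `x ≥ 0`, the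
negative part `min x' 0` of any representative is negligible, so wherever `x' ≤ 0` the product
`x' * y = min x' 0 * y` is close to `0` instead of `1`. For (2) ⇒ (3) a diagonal argument: if
`x' ≤ ρ ^ m` at points `ε_m → 0`, the net equal to `max x' 0` at the points `ε_m` and to `0`
elsewhere is negligible, and subtracting it from `x'` gives a representative of `x` that is `≤ 0`
at every `ε_m`.
-/

open Filter Topology

namespace RC

def F : Filter ℝ := nhdsWithin 0 (Set.Ioi 0)

/-- A gauge: a net `ρ : (0,1] → (0,1]` with `ρ ε → 0` as `ε → 0⁺`. -/
def Gauge (ρ : ℝ → ℝ) : Prop :=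
  (∀ ε ∈ Set.Ioc (0:ℝ) 1, ρ ε ∈ Set.Ioc (0:ℝ) 1) ∧ Tendsto ρ F (nhds 0)

/-- ρ-moderate real nets: `x_ε = O(ρ_ε^{-N})` for some `N`. -/
def Mod (ρ x : ℝ → ℝ) : Prop :=
  ∃ N : ℕ, ∃ C : ℝ, ∀ᶠ ε in F, |x ε| ≤ C * (ρ ε)⁻¹ ^ N

/-- ρ-negligible real nets: `x_ε = O(ρ_ε^{N})` for all `N`. -/
def Ngl (ρ x : ℝ → ℝ) : Prop :=
  ∀ N : ℕ, ∃ C : ℝ, ∀ᶠ ε in F, |x ε| ≤ C * ρ ε ^ N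

def Eqv (ρ x y : ℝ → ℝ) : Prop := Ngl ρ (x - y)

/-- The order on generalized numbers, at the level of representatives. -/
def leG (ρ x y : ℝ → ℝ) : Prop :=
  ∀ x', Mod ρ x' → Eqv ρ x' x → ∃ y', Mod ρ y' ∧ Eqv ρ y' y ∧ ∀ᶠ ε in F, x' ε ≤ y' ε

/-- Invertibility in the quotient ring, at the level of representatives. -/
def InvG (ρ x : ℝ → ℝ) : Prop := ∃ y, Mod ρ y ∧ Eqv ρ (x * y) 1

def ltG (ρ x y : ℝ → ℝ) : Prop := leG ρ x y ∧ InvG ρ (y - x)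

def posInv (ρ r : ℝ → ℝ) : Prop := ltG ρ 0 r

def ModC (ρ : ℝ → ℝ) (x : ℝ → ℂ) : Prop :=
  ∃ N : ℕ, ∃ C : ℝ, ∀ᶠ ε in F, ‖x ε‖ ≤ C * (ρ ε)⁻¹ ^ N

def NglC (ρ : ℝ → ℝ) (x : ℝ → ℂ) : Prop :=
  ∀ N : ℕ, ∃ C : ℝ, ∀ᶠ ε in F, ‖x ε‖ ≤ C * ρ ε ^ N

def EqvC (ρ : ℝ → ℝ) (x y : ℝ → ℂ) : Prop := NglC ρ (x - y)

def InvC (ρ : ℝ → ℝ) (x : ℝ → ℂ) : Prop := ∃ y, ModC ρ y ∧ EqvC ρ (x * y) 1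

noncomputable def absC (x : ℝ → ℂ) : ℝ → ℝ := fun ε => ‖x ε‖

theorem _root_.Filter.exists_seq_tendsto_forall_of_forall_frequently {α : Type*} {l : Filter α}
    [l.IsCountablyGenerated] {P : ℕ → α → Prop} (h : ∀ n, ∃ᶠ a in l, P n a) :
    ∃ e : ℕ → α, Tendsto e atTop l ∧ ∀ n, P n (e n) := by
  obtain ⟨s, hs⟩ := l.exists_antitone_basis
  choose e he using fun n => ((h n).and_eventually (hs.mem n)).exists
  exact ⟨e, hs.tendsto fun n => (he n).2, fun n => (he n).1⟩

instance : F.IsCountablyGenerated := by unfold F; infer_instance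

lemma eventually_ne_F (a : ℝ) : ∀ᶠ ε in F, ε ≠ a := by
  rcases eq_or_ne a 0 with rfl | ha
  · exact (eventually_mem_nhdsWithin : ∀ᶠ ε in F, ε ∈ Set.Ioi 0).mono fun ε hε => ne_of_gt hε
  · exact eventually_ne_nhdsWithin ha.symm

variable {ρ u v w x x' : ℝ → ℝ}

lemma Gauge.eventually_pos_le_one (hρ : Gauge ρ) : ∀ᶠ ε in F, 0 < ρ ε ∧ ρ ε ≤ 1 := by
  filter_upwards [(Ioc_mem_nhdsGT one_pos : Set.Ioc (0:ℝ) 1 ∈ F)] with ε hε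
  exact hρ.1 ε hε

lemma mod_zero : Mod ρ 0 := ⟨0, 0, Eventually.of_forall fun ε => by simp⟩

lemma ngl_of_forall_eventually_abs_le_pow (h : ∀ N, ∀ᶠ ε in F, |u ε| ≤ ρ ε ^ N) : Ngl ρ u :=
  fun N => ⟨1, by simpa using h N⟩

lemma Ngl.mono (hv : Ngl ρ v) (h : ∀ᶠ ε in F, |u ε| ≤ |v ε|) : Ngl ρ u := fun N => by
  obtain ⟨C, hC⟩ := hv N
  exact ⟨C, by filter_upwards [h, hC] with ε h1 h2 using h1.trans h2⟩

lemma Ngl.neg (hu : Ngl ρ u) : Ngl ρ (-u) :=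
  hu.mono (Eventually.of_forall fun ε => (abs_neg (u ε)).le)

lemma Ngl.add (hu : Ngl ρ u) (hv : Ngl ρ v) : Ngl ρ (u + v) := fun N => by
  obtain ⟨C, hC⟩ := hu N
  obtain ⟨D, hD⟩ := hv N
  refine ⟨C + D, ?_⟩
  filter_upwards [hC, hD] with ε h1 h2
  calc |u ε + v ε| ≤ |u ε| + |v ε| := abs_add_le _ _
    _ ≤ (C + D) * ρ ε ^ N := by linarith

lemma Ngl.eventually_abs_le_pow (hρ : Gauge ρ) (hu : Ngl ρ u) (N : ℕ) :
    ∀ᶠ ε in F, |u ε| ≤ ρ ε ^ N := by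
  obtain ⟨C, hC⟩ := hu (N + 1)
  have hCρ : ∀ᶠ ε in F, C * ρ ε ≤ 1 := by
    have : Tendsto (fun ε => C * ρ ε) F (𝓝 0) := by simpa using hρ.2.const_mul C
    exact this.eventually (ge_mem_nhds one_pos)
  filter_upwards [hC, hCρ, hρ.eventually_pos_le_one] with ε h1 h2 h3
  calc |u ε| ≤ C * ρ ε * ρ ε ^ N := by rw [mul_assoc, ← pow_succ']; exact h1
    _ ≤ ρ ε ^ N := by simpa using mul_le_mul_of_nonneg_right h2 (pow_nonneg h3.1.le N)

lemma Ngl.tendsto_zero (hρ : Gauge ρ) (hu : Ngl ρ u) : Tendsto u F (𝓝 0) :=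
  squeeze_zero_norm' (by simpa using hu.eventually_abs_le_pow hρ 1) hρ.2

lemma Ngl.mul_mod (hρ : Gauge ρ) (hu : Ngl ρ u) (hv : Mod ρ v) : Ngl ρ (u * v) := fun N => by
  obtain ⟨M, C, hC⟩ := hv
  refine ⟨C, ?_⟩
  filter_upwards [hu.eventually_abs_le_pow hρ (N + M), hC, hρ.eventually_pos_le_one]
    with ε h1 h2 h3
  have hcancel : ρ ε ^ (N + M) * (C * (ρ ε)⁻¹ ^ M) = C * ρ ε ^ N := by
    have := h3.1.ne'
    rw [inv_pow, pow_add]; field_simp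
  calc |u ε * v ε| = |u ε| * |v ε| := abs_mul _ _
    _ ≤ ρ ε ^ (N + M) * (C * (ρ ε)⁻¹ ^ M) :=
      mul_le_mul h1 h2 (abs_nonneg _) (pow_nonneg h3.1.le _)
    _ = C * ρ ε ^ N := hcancel

lemma Mod.sub_ngl (hρ : Gauge ρ) (hu : Mod ρ u) (hv : Ngl ρ v) : Mod ρ (u - v) := by
  obtain ⟨N, C, hC⟩ := hu
  refine ⟨N, C + 1, ?_⟩
  filter_upwards [hC, hv.eventually_abs_le_pow hρ 0, hρ.eventually_pos_le_one] with ε h1 h2 h3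
  have hi : (1:ℝ) ≤ (ρ ε)⁻¹ ^ N := one_le_pow₀ ((one_le_inv₀ h3.1).2 h3.2)
  calc |u ε - v ε| ≤ |u ε| + |v ε| := abs_sub _ _
    _ ≤ (C + 1) * (ρ ε)⁻¹ ^ N := by rw [pow_zero] at h2; linarith

lemma eqv_of_eventuallyEq (h : u =ᶠ[F] v) : Eqv ρ u v :=
  fun N => ⟨0, h.mono fun ε h => by simp [h]⟩

lemma Eqv.symm (h : Eqv ρ u v) : Eqv ρ v u := by
  simpa [Eqv] using Ngl.neg h

lemma Eqv.trans (h₁ : Eqv ρ u v) (h₂ : Eqv ρ v w) : Eqv ρ u w := by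
  simpa [Eqv] using Ngl.add h₁ h₂

lemma Eqv.mul_right (hρ : Gauge ρ) (h : Eqv ρ u v) (hw : Mod ρ w) : Eqv ρ (u * w) (v * w) := by
  simpa [Eqv, sub_mul] using h.mul_mod hρ hw

lemma ngl_min_zero_of_eqv_of_eventually_nonneg (h : Eqv ρ u v) (hv : ∀ᶠ ε in F, 0 ≤ v ε) :
    Ngl ρ (fun ε => min (u ε) 0) :=
  Ngl.mono h <| hv.mono fun ε hv => by
    rcases le_total (u ε) 0 with hu | hu
    · rw [min_eq_left hu, Pi.sub_apply, abs_of_nonpos hu, abs_sub_comm]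
      exact (le_abs_self _).trans' (by linarith)
    · simp [hu]

lemma mod_inv_of_eventually_pow_lt (hρ : Gauge ρ) {m : ℕ} (h : ∀ᶠ ε in F, ρ ε ^ m < x' ε) :
    Mod ρ x'⁻¹ := by
  refine ⟨m, 1, ?_⟩
  filter_upwards [h, hρ.eventually_pos_le_one] with ε h1 h2
  have hpow : 0 < ρ ε ^ m := pow_pos h2.1 m
  rw [Pi.inv_apply, abs_of_pos (inv_pos.2 (hpow.trans h1)), one_mul, inv_pow]
  exact inv_anti₀ hpow h1.le

lemma invG_of_eventually_pow_lt (hρ : Gauge ρ) (hx' : Eqv ρ x' x) {m : ℕ}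
    (h : ∀ᶠ ε in F, ρ ε ^ m < x' ε) : InvG ρ x := by
  have hinv : x' * x'⁻¹ =ᶠ[F] 1 := by
    filter_upwards [h, hρ.eventually_pos_le_one] with ε h1 h2
    exact mul_inv_cancel₀ ((pow_pos h2.1 m).trans h1).ne'
  have hmod := mod_inv_of_eventually_pow_lt hρ h
  exact ⟨x'⁻¹, hmod, (hx'.symm.mul_right hρ hmod).trans (eqv_of_eventuallyEq hinv)⟩

lemma leG_zero_of_eventually_pow_lt (hρ : Gauge ρ) (hx'm : Mod ρ x') (hx' : Eqv ρ x' x) {m : ℕ}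
    (h : ∀ᶠ ε in F, ρ ε ^ m < x' ε) : leG ρ 0 x := by
  intro z _ hz
  have hzngl : Ngl ρ z := by simpa [Eqv] using hz
  refine ⟨x', hx'm, hx', ?_⟩
  filter_upwards [hzngl.eventually_abs_le_pow hρ m, h] with ε h1 h2
  linarith [le_abs_self (z ε)]

lemma eventually_pos_of_invG_of_leG_zero (hρ : Gauge ρ) (hinv : InvG ρ x) (hle : leG ρ 0 x)
    (hx' : Eqv ρ x' x) : ∀ᶠ ε in F, 0 < x' ε := by
  obtain ⟨y, hym, hxy⟩ := hinv
  obtain ⟨y', -, hy', hy'pos⟩ := hle 0 mod_zero (eqv_of_eventuallyEq EventuallyEq.rfl)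
  have hx'y : Tendsto (x' * y) F (𝓝 1) :=
    tendsto_sub_nhds_zero_iff.1 (((hx'.mul_right hρ hym).trans hxy).tendsto_zero hρ)
  have hneg : Tendsto (fun ε => min (x' ε) 0 * y ε) F (𝓝 0) :=
    ((ngl_min_zero_of_eqv_of_eventually_nonneg (hx'.trans hy'.symm) hy'pos).mul_mod hρ
      hym).tendsto_zero hρ
  filter_upwards [hx'y.eventually (lt_mem_nhds one_half_lt_one),
    hneg.eventually (gt_mem_nhds one_half_pos)] with ε h1 h2
  by_contra! hx'ε
  rw [min_eq_left hx'ε] at h2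
  exact h1.not_gt h2

lemma exists_eqv_frequently_nonpos (hρ : Gauge ρ) (hx'm : Mod ρ x')
    (h : ∀ m : ℕ, ∃ᶠ ε in F, x' ε ≤ ρ ε ^ m) :
    ∃ x'', Mod ρ x'' ∧ Eqv ρ x'' x' ∧ ∃ᶠ ε in F, x'' ε ≤ 0 := by
  obtain ⟨e, he, hx'e⟩ := exists_seq_tendsto_forall_of_forall_frequently h
  set d := (Set.range e).indicator fun ε => max (x' ε) 0
  have hde : ∀ m, d (e m) = max (x' (e m)) 0 := fun m =>
    Set.indicator_of_mem (Set.mem_range_self m) _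
  have hd : Ngl ρ d := by
    refine ngl_of_forall_eventually_abs_le_pow fun N => ?_
    have hfar : ∀ᶠ ε in F, ∀ m ∈ Set.Iio N, e m ≠ ε :=
      (Set.finite_Iio N).eventually_all.2 fun m _ => (eventually_ne_F (e m)).mono fun _ => Ne.symm
    filter_upwards [hfar, hρ.eventually_pos_le_one] with ε hε hρε
    by_cases hmem : ε ∈ Set.range e
    · obtain ⟨m, rfl⟩ := hmem
      have hNm : N ≤ m := not_lt.1 fun hm => hε m hm rfl
      rw [hde, abs_of_nonneg (le_max_right _ _)]
      exact max_le ((hx'e m).trans (pow_le_pow_of_le_one hρε.1.le hρε.2 hNm))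
        (pow_nonneg hρε.1.le N)
    · simp [d, hmem, pow_nonneg hρε.1.le]
  refine ⟨x' - d, hx'm.sub_ngl hρ hd, by simpa [Eqv] using hd.neg, ?_⟩
  refine he.frequently (Frequently.of_forall fun m => ?_)
  simp [hde]

lemma exists_pow_lt_of_forall_eqv_eventually_pos (hρ : Gauge ρ)
    (hpos : ∀ x'', Mod ρ x'' → Eqv ρ x'' x → ∀ᶠ ε in F, 0 < x'' ε)
    (hx'm : Mod ρ x') (hx' : Eqv ρ x' x) : ∃ m : ℕ, ∀ᶠ ε in F, ρ ε ^ m < x' ε := by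
  by_contra! hdip
  obtain ⟨x'', hx''m, hx'', hnonpos⟩ := exists_eqv_frequently_nonpos hρ hx'm hdip
  obtain ⟨ε, hε, hε'⟩ := (hnonpos.and_eventually (hpos x'' hx''m (hx''.trans hx'))).exists
  exact hε.not_gt hε'

/-- Mayer's lemma: characterizations of positive invertible generalized numbers. -/
theorem mayer_lemma (ρ : ℝ → ℝ) (hρ : Gauge ρ) (x : ℝ → ℝ) (hx : Mod ρ x) :
    List.TFAE
      [InvG ρ x ∧ leG ρ 0 x,
       ∀ x', Mod ρ x' → Eqv ρ x' x → ∀ᶠ ε in F, 0 < x' ε,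
       ∀ x', Mod ρ x' → Eqv ρ x' x → ∃ m : ℕ, ∀ᶠ ε in F, ρ ε ^ m < x' ε,
       ∃ x', Mod ρ x' ∧ Eqv ρ x' x ∧ ∃ m : ℕ, ∀ᶠ ε in F, ρ ε ^ m < x' ε] := by
  tfae_have 1 → 2 := fun ⟨hinv, hle⟩ _ _ hx' => eventually_pos_of_invG_of_leG_zero hρ hinv hle hx'
  tfae_have 2 → 3 := fun hpos _ => exists_pow_lt_of_forall_eqv_eventually_pos hρ hpos
  tfae_have 3 → 4 := fun h =>
    ⟨x, hx, eqv_of_eventuallyEq EventuallyEq.rfl, h x hx (eqv_of_eventuallyEq EventuallyEq.rfl)⟩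
  tfae_have 4 → 1 := fun ⟨_, hx'm, hx', _, h⟩ =>
    ⟨invG_of_eventually_pow_lt hρ hx' h, leG_zero_of_eventually_pow_lt hρ hx'm hx' h⟩
  tfae_finish

end RC
end

section
/- A generalized complex number z ∈ ℂ̃_ρ is invertible in the ring ℂ̃_ρ if and only if its generalized absolute value |z| ∈ ℝ̃_ρ is invertible in ℝ̃_ρ. -/
open Filter Topology

namespace RC

/-! If `z w ≈ 1` then `|z| |w| ≈ 1`, because `||z w| - 1| ≤ |z w - 1|` pointwise. Conversely, if
`|z| y ≈ 1`, put `w := z⁻¹ |z| y`: the phase `z⁻¹ |z|` has modulus at most `1` (it is `0` where `z`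
vanishes), so `w` is moderate, and `z w = |z| y` holds pointwise, including where `z = 0`. -/

lemma Mod.modC_of_norm_le {ρ y : ℝ → ℝ} {w : ℝ → ℂ} (hy : Mod ρ y)
    (hwy : ∀ ε, ‖w ε‖ ≤ |y ε|) : ModC ρ w := by
  obtain ⟨N, C, h⟩ := hy
  exact ⟨N, C, h.mono fun ε hε => (hwy ε).trans hε⟩

lemma Ngl.nglC_of_norm_le {ρ x : ℝ → ℝ} {u : ℝ → ℂ} (hx : Ngl ρ x)
    (hux : ∀ ε, ‖u ε‖ ≤ |x ε|) : NglC ρ u := fun N => by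
  obtain ⟨C, h⟩ := hx N
  exact ⟨C, h.mono fun ε hε => (hux ε).trans hε⟩

lemma NglC.ngl_of_abs_le {ρ x : ℝ → ℝ} {u : ℝ → ℂ} (hu : NglC ρ u)
    (hxu : ∀ ε, |x ε| ≤ ‖u ε‖) : Ngl ρ x := fun N => by
  obtain ⟨C, h⟩ := hu N
  exact ⟨C, h.mono fun ε hε => (hxu ε).trans hε⟩

lemma ModC.mod_absC {ρ : ℝ → ℝ} {w : ℝ → ℂ} (hw : ModC ρ w) : Mod ρ (absC w) := by
  obtain ⟨N, C, h⟩ := hw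
  exact ⟨N, C, h.mono fun ε hε => by rwa [absC, abs_norm]⟩

lemma mul_inv_mul_norm (c : ℂ) : c * (c⁻¹ * ‖c‖) = ‖c‖ := by
  rcases eq_or_ne c 0 with rfl | hc
  · simp
  · rw [← mul_assoc, mul_inv_cancel₀ hc, one_mul]

lemma norm_inv_mul_norm_le_one (c : ℂ) : ‖c⁻¹ * ‖c‖‖ ≤ 1 := by
  rw [norm_mul, norm_inv, Complex.norm_real, norm_norm]
  exact inv_mul_le_one

theorem invertible_iff_abs_invertible_general (ρ : ℝ → ℝ)
    (z : ℝ → ℂ) :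
    InvC ρ z ↔ InvG ρ (absC z) := by
  constructor
  · rintro ⟨w, hw, hzw⟩
    refine ⟨absC w, hw.mod_absC, hzw.ngl_of_abs_le fun ε => ?_⟩
    simpa [absC] using abs_norm_sub_norm_le (z ε * w ε) 1
  · rintro ⟨y, hy, hzy⟩
    refine ⟨fun ε => (z ε)⁻¹ * ‖z ε‖ * y ε, hy.modC_of_norm_le fun ε => ?_,
      hzy.nglC_of_norm_le fun ε => ?_⟩
    · rw [norm_mul, Complex.norm_real, Real.norm_eq_abs]
      exact mul_le_of_le_one_left (abs_nonneg _) (norm_inv_mul_norm_le_one _)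
    · have hzw : z ε * ((z ε)⁻¹ * ‖z ε‖ * y ε) = (absC z ε * y ε : ℝ) := by
        rw [← mul_assoc, mul_inv_mul_norm, absC, Complex.ofReal_mul]
      rw [Pi.sub_apply, Pi.mul_apply, hzw, Pi.one_apply, ← Complex.ofReal_one,
        ← Complex.ofReal_sub, Complex.norm_real, Real.norm_eq_abs]
      rfl

/-- `z ∈ ℂ̃_ρ` is invertible iff `|z| ∈ ℝ̃_ρ` is invertible. -/
theorem invertible_iff_abs_invertible (ρ : ℝ → ℝ) (hρ : Gauge ρ)
    (z : ℝ → ℂ) (hz : ModC ρ z) :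
    InvC ρ z ↔ InvG ρ (absC z) :=
  invertible_iff_abs_invertible_general ρ z

end RC
end

section
/- Invertible generalized complex numbers are dense in ℂ̃_ρ with respect to the sharp topology: for every z ∈ ℂ̃_ρ and every invertible r ∈ ℝ̃_ρ with r > 0, there exists an invertible z* ∈ ℂ̃_ρ with |z − z*| < r. -/
open Filter Topology

namespace RC

/-
If `r ≥ b ρ^N` then moving `z` by at most `(b/2) ρ^N` makes it invertible: where `|z_ε|` is
smaller than `δ_ε = (b/4) ρ_ε^N`, shift it by `2δ_ε`, so that the new net has modulus at least
`δ_ε` everywhere, and a net bounded below by a power of `ρ` is invertible. The lower bound on `r`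
comes from its invertibility: `r_ε y_ε ≈ 1` with `y` moderate forces `|r_ε| ≥ b ρ_ε^N`, and
`0 ≤ r` up to a negligible net excludes the negative sign.
-/

lemma eventually_mem_Ioc_zero_one : ∀ᶠ ε in F, ε ∈ Set.Ioc (0 : ℝ) 1 :=
  Ioc_mem_nhdsGT_of_mem ⟨le_rfl, zero_lt_one⟩

section Gauge

variable {ρ : ℝ → ℝ}

lemma Gauge.eventually_mem_Ioc (hρ : Gauge ρ) : ∀ᶠ ε in F, ρ ε ∈ Set.Ioc (0 : ℝ) 1 :=
  eventually_mem_Ioc_zero_one.mono hρ.1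

lemma Gauge.eventually_lt (hρ : Gauge ρ) {c : ℝ} (hc : 0 < c) : ∀ᶠ ε in F, ρ ε < c :=
  hρ.2.eventually (eventually_lt_nhds hc)

lemma Gauge.eventually_one_le_inv_pow (hρ : Gauge ρ) (N : ℕ) :
    ∀ᶠ ε in F, 1 ≤ (ρ ε)⁻¹ ^ N :=
  hρ.eventually_mem_Ioc.mono fun _ h => one_le_pow₀ ((one_le_inv₀ h.1).mpr h.2)

end Gauge

section Moderate

variable {ρ x y : ℝ → ℝ}

lemma Mod.exists_pos_bound (hρ : Gauge ρ) (hx : Mod ρ x) :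
    ∃ N : ℕ, ∃ C : ℝ, 0 < C ∧ ∀ᶠ ε in F, |x ε| ≤ C * (ρ ε)⁻¹ ^ N := by
  obtain ⟨N, C, hC⟩ := hx
  refine ⟨N, max C 1, by positivity, ?_⟩
  filter_upwards [hC, hρ.eventually_one_le_inv_pow N] with ε hxε hρε
  exact hxε.trans (by gcongr; exact le_max_left _ _)

lemma Mod.add (hρ : Gauge ρ) (hx : Mod ρ x) (hy : Mod ρ y) : Mod ρ (x + y) := by
  obtain ⟨N₁, C₁, hC₁, hx⟩ := hx.exists_pos_bound hρ
  obtain ⟨N₂, C₂, hC₂, hy⟩ := hy.exists_pos_bound hρ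
  refine ⟨max N₁ N₂, C₁ + C₂, ?_⟩
  filter_upwards [hx, hy, hρ.eventually_mem_Ioc] with ε hxε hyε hρε
  have hinv : 1 ≤ (ρ ε)⁻¹ := (one_le_inv₀ hρε.1).mpr hρε.2
  calc |x ε + y ε| ≤ |x ε| + |y ε| := abs_add_le _ _
    _ ≤ C₁ * (ρ ε)⁻¹ ^ max N₁ N₂ + C₂ * (ρ ε)⁻¹ ^ max N₁ N₂ := by
      gcongr
      · exact hxε.trans (by gcongr; exact le_max_left _ _)
      · exact hyε.trans (by gcongr; exact le_max_right _ _)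
    _ = (C₁ + C₂) * (ρ ε)⁻¹ ^ max N₁ N₂ := by ring

lemma Mod.neg (hx : Mod ρ x) : Mod ρ (-x) := by
  obtain ⟨N, C, hC⟩ := hx
  exact ⟨N, C, hC.mono fun ε h => by simpa using h⟩

lemma Mod.sub (hρ : Gauge ρ) (hx : Mod ρ x) (hy : Mod ρ y) : Mod ρ (x - y) := by
  simpa only [sub_eq_add_neg] using hx.add hρ hy.neg

lemma ModC.of_norm_sub_le (hρ : Gauge ρ) {z w : ℝ → ℂ} (hz : ModC ρ z) {c : ℝ}
    (h : ∀ᶠ ε in F, ‖w ε - z ε‖ ≤ c) : ModC ρ w := by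
  obtain ⟨N, C, hC⟩ := hz
  refine ⟨N, C + |c|, ?_⟩
  filter_upwards [hC, h, hρ.eventually_one_le_inv_pow N] with ε hzε hwε hρε
  calc ‖w ε‖ ≤ ‖z ε‖ + ‖w ε - z ε‖ := norm_le_norm_add_norm_sub' _ _
    _ ≤ C * (ρ ε)⁻¹ ^ N + |c| * (ρ ε)⁻¹ ^ N := by nlinarith [le_abs_self c, abs_nonneg c]
    _ = (C + |c|) * (ρ ε)⁻¹ ^ N := by ring

lemma Ngl.eventually_abs_le (hρ : Gauge ρ) (hx : Ngl ρ x) (N : ℕ) {c : ℝ} (hc : 0 < c) :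
    ∀ᶠ ε in F, |x ε| ≤ c * ρ ε ^ N := by
  obtain ⟨C, hC⟩ := hx (N + 1)
  filter_upwards [hC, hρ.eventually_mem_Ioc, hρ.eventually_lt (by positivity : 0 < c / (|C| + 1))]
    with ε hxε hρε hsmall
  have hρ0 : 0 < ρ ε := hρε.1
  have hCρ : |C| * ρ ε ≤ c := by
    calc |C| * ρ ε ≤ (|C| + 1) * (c / (|C| + 1)) := by gcongr; linarith
      _ = c := by field_simp
  calc |x ε| ≤ C * ρ ε ^ (N + 1) := hxε
    _ ≤ |C| * ρ ε * ρ ε ^ N := by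
      rw [pow_succ, mul_comm (ρ ε ^ N), ← mul_assoc]
      gcongr
      exact le_abs_self C
    _ ≤ c * ρ ε ^ N := by gcongr

end Moderate

section Invertible

variable {ρ : ℝ → ℝ}

lemma eventually_norm_inv_le {𝕜 : Type*} [NormedDivisionRing 𝕜] (hρ : Gauge ρ) {x : ℝ → 𝕜}
    {b : ℝ} (hb : 0 < b) {N : ℕ} (h : ∀ᶠ ε in F, b * ρ ε ^ N ≤ ‖x ε‖) :
    ∀ᶠ ε in F, x ε * (x ε)⁻¹ = 1 ∧ ‖(x ε)⁻¹‖ ≤ b⁻¹ * (ρ ε)⁻¹ ^ N := by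
  filter_upwards [h, hρ.eventually_mem_Ioc] with ε hxε hρε
  have hpos : 0 < b * ρ ε ^ N := mul_pos hb (pow_pos hρε.1 N)
  refine ⟨mul_inv_cancel₀ (norm_pos_iff.mp (hpos.trans_le hxε)), ?_⟩
  rw [norm_inv, inv_pow, ← mul_inv]
  exact inv_anti₀ hpos hxε

lemma InvC.of_pow_le_norm (hρ : Gauge ρ) {x : ℝ → ℂ} {b : ℝ} (hb : 0 < b) {N : ℕ}
    (h : ∀ᶠ ε in F, b * ρ ε ^ N ≤ ‖x ε‖) : InvC ρ x := by
  have hinv := eventually_norm_inv_le hρ hb h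
  refine ⟨fun ε => (x ε)⁻¹, ⟨N, b⁻¹, hinv.mono fun _ h => h.2⟩, fun _ => ⟨0, ?_⟩⟩
  filter_upwards [hinv] with ε hε
  simp [hε.1]

lemma InvG.of_pow_le_abs (hρ : Gauge ρ) {x : ℝ → ℝ} {b : ℝ} (hb : 0 < b) {N : ℕ}
    (h : ∀ᶠ ε in F, b * ρ ε ^ N ≤ |x ε|) : InvG ρ x := by
  have hinv := eventually_norm_inv_le hρ hb (x := x) h
  refine ⟨fun ε => (x ε)⁻¹, ⟨N, b⁻¹, hinv.mono fun _ h => h.2⟩, fun _ => ⟨0, ?_⟩⟩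
  filter_upwards [hinv] with ε hε
  simp [hε.1]

lemma InvG.exists_pow_le_abs (hρ : Gauge ρ) {x : ℝ → ℝ} (hx : InvG ρ x) :
    ∃ N : ℕ, ∃ b : ℝ, 0 < b ∧ ∀ᶠ ε in F, b * ρ ε ^ N ≤ |x ε| := by
  obtain ⟨y, hy, hxy⟩ := hx
  obtain ⟨N, C, hC, hyC⟩ := hy.exists_pos_bound hρ
  refine ⟨N, (2 * C)⁻¹, by positivity, ?_⟩
  filter_upwards [hyC, hxy.eventually_abs_le hρ 0 one_half_pos, hρ.eventually_mem_Ioc]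
    with ε hyε hxyε hρε
  have hρN : 0 < ρ ε ^ N := pow_pos hρε.1 N
  have hhalf : 1 / 2 ≤ |x ε| * |y ε| := by
    have := abs_sub_abs_le_abs_sub 1 (x ε * y ε)
    simp only [Pi.sub_apply, Pi.mul_apply, Pi.one_apply, pow_zero, mul_one] at hxyε
    rw [abs_one, abs_sub_comm, abs_mul] at this
    linarith
  have hbound : 1 / 2 ≤ |x ε| * C / ρ ε ^ N := by
    calc 1 / 2 ≤ |x ε| * |y ε| := hhalf
      _ ≤ |x ε| * (C * (ρ ε)⁻¹ ^ N) := by gcongr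
      _ = |x ε| * C / ρ ε ^ N := by rw [inv_pow]; ring
  rw [le_div_iff₀ hρN] at hbound
  rw [inv_mul_le_iff₀ (by positivity)]
  linarith

lemma posInv.exists_pow_le (hρ : Gauge ρ) {r : ℝ → ℝ} (hr : posInv ρ r) :
    ∃ N : ℕ, ∃ b : ℝ, 0 < b ∧ ∀ᶠ ε in F, b * ρ ε ^ N ≤ r ε := by
  obtain ⟨hle, hinv⟩ := hr
  obtain ⟨N, b, hb, hrb⟩ := InvG.exists_pow_le_abs hρ (by simpa only [sub_zero] using hinv)
  obtain ⟨r', -, hr'r, hr'⟩ := hle 0 ⟨0, 0, by simp⟩ fun _ => ⟨0, by simp⟩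
  refine ⟨N, b, hb, ?_⟩
  filter_upwards [hrb, hr', hr'r.eventually_abs_le hρ N (half_pos hb), hρ.eventually_mem_Ioc]
    with ε hrε hr'ε hdiff hρε
  have hbρN : 0 < b * ρ ε ^ N := mul_pos hb (pow_pos hρε.1 N)
  have hr'_nonneg : 0 ≤ r' ε := hr'ε
  have hclose : r' ε - r ε ≤ b / 2 * ρ ε ^ N := (abs_le.mp hdiff).2
  have hr_nonneg : 0 ≤ r ε := by
    by_contra hneg
    rw [abs_of_neg (not_le.mp hneg)] at hrε
    linarith
  rwa [abs_of_nonneg hr_nonneg] at hrε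

end Invertible

section Order

variable {ρ x y : ℝ → ℝ}

lemma leG_of_eventually_le (hρ : Gauge ρ) (hx : Mod ρ x) (hy : Mod ρ y)
    (h : ∀ᶠ ε in F, x ε ≤ y ε) : leG ρ x y := by
  intro x' hx' hx'x
  refine ⟨x' + (y - x), hx'.add hρ (hy.sub hρ hx), ?_, ?_⟩
  · have : x' + (y - x) - y = x' - x := by ring
    unfold Eqv
    rwa [this]
  · filter_upwards [h] with ε hε
    simp only [Pi.add_apply, Pi.sub_apply]
    linarith

lemma ltG_of_pow_le_sub (hρ : Gauge ρ) (hx : Mod ρ x) (hy : Mod ρ y) {b : ℝ} (hb : 0 < b)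
    {N : ℕ} (h : ∀ᶠ ε in F, b * ρ ε ^ N ≤ y ε - x ε) : ltG ρ x y := by
  refine ⟨leG_of_eventually_le hρ hx hy ?_, InvG.of_pow_le_abs hρ hb (N := N) ?_⟩
  · filter_upwards [h, hρ.eventually_mem_Ioc] with ε hε hρε
    have : 0 < b * ρ ε ^ N := mul_pos hb (pow_pos hρε.1 N)
    linarith
  · exact h.mono fun ε hε => hε.trans (le_abs_self _)

end Order

noncomputable def nudge (δ : ℝ) (z : ℂ) : ℂ := if ‖z‖ < δ then z + 2 * δ else z

lemma norm_sub_nudge_le (z : ℂ) {δ : ℝ} (hδ : 0 ≤ δ) : ‖z - nudge δ z‖ ≤ 2 * δ := by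
  unfold nudge
  split_ifs
  · rw [sub_add_cancel_left, norm_neg, ← Complex.ofReal_ofNat, ← Complex.ofReal_mul,
      Complex.norm_real, Real.norm_of_nonneg (by positivity)]
  · simpa using hδ

lemma le_norm_nudge (δ : ℝ) (z : ℂ) : δ ≤ ‖nudge δ z‖ := by
  unfold nudge
  split_ifs with h
  · have h2δ : ‖(2 * δ : ℂ)‖ = 2 * |δ| := by
      rw [← Complex.ofReal_ofNat, ← Complex.ofReal_mul, Complex.norm_real, Real.norm_eq_abs,
        abs_mul, abs_two]
    have := norm_sub_norm_le (2 * δ : ℂ) (-z)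
    rw [sub_neg_eq_add, add_comm, norm_neg, h2δ] at this
    linarith [le_abs_self δ]
  · exact not_lt.mp h

/-- Invertible generalized complex numbers are dense in the sharp topology. -/
theorem invertible_dense (ρ : ℝ → ℝ) (hρ : Gauge ρ)
    (z : ℝ → ℂ) (hz : ModC ρ z)
    (r : ℝ → ℝ) (hr : Mod ρ r) (hrpos : posInv ρ r) :
    ∃ w : ℝ → ℂ, ModC ρ w ∧ InvC ρ w ∧ ltG ρ (absC (z - w)) r := by
  obtain ⟨N, b, hb, hrb⟩ := hrpos.exists_pow_le hρ
  set w : ℝ → ℂ := fun ε => nudge (b / 4 * ρ ε ^ N) (z ε)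
  have hρN : ∀ᶠ ε in F, 0 < ρ ε ^ N ∧ ρ ε ^ N ≤ 1 :=
    hρ.eventually_mem_Ioc.mono fun _ h => ⟨pow_pos h.1 N, pow_le_one₀ h.1.le h.2⟩
  have hdist : ∀ᶠ ε in F, ‖z ε - w ε‖ ≤ b / 2 * ρ ε ^ N := hρN.mono fun ε hε => by
    have := norm_sub_nudge_le (z ε) (δ := b / 4 * ρ ε ^ N) (by have := hε.1; positivity)
    linarith
  have hdist_le : ∀ᶠ ε in F, ‖z ε - w ε‖ ≤ b / 2 := by
    filter_upwards [hdist, hρN] with ε h hε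
    nlinarith
  refine ⟨w, hz.of_norm_sub_le hρ (hdist_le.mono fun ε h => by rwa [norm_sub_rev]),
    InvC.of_pow_le_norm hρ (by positivity) (.of_forall fun ε => le_norm_nudge _ (z ε)),
    ltG_of_pow_le_sub hρ ⟨0, b / 2, ?_⟩ hr (half_pos hb) (N := N) ?_⟩
  · filter_upwards [hdist_le] with ε h
    simpa [absC] using h
  · filter_upwards [hrb, hdist] with ε hrε hε
    change _ ≤ r ε - ‖z ε - w ε‖
    linarith

end RC
end

section
/- For a gauge ρ, the relation x < y on ℝ̃_ρ (i.e. x ≤ y and y − x invertible) holds if and only if for all representatives [x_ε] = x and [y_ε] = y one has x_ε < y_ε for ε small and moreover y_ε − x_ε > ρ_ε^m for some m ∈ ℕ and ε small. -/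
open Filter Topology

namespace RC

/-! Invertibility of `w` in `ℝ̃_ρ` amounts to `ρ_ε^m < |w_ε|` eventually, for some `m`; this
survives negligible perturbations at the cost of raising `m`. If moreover `x ≤ y`, every
representative of `y - x` lies above a negligible net, so the bound on its absolute value bounds
the net itself. Conversely, `1 / (y_ε - x_ε)` is a moderate inverse of `y - x`. -/

lemma eventually_mem_Ioc_F : ∀ᶠ ε in F, ε ∈ Set.Ioc (0:ℝ) 1 := by
  filter_upwards [self_mem_nhdsWithin, nhdsWithin_le_nhds (Iic_mem_nhds zero_lt_one)]
    with ε hε0 hε1 using ⟨hε0, hε1⟩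

lemma Gauge.eventually_pos {ρ : ℝ → ℝ} (hρ : Gauge ρ) : ∀ᶠ ε in F, 0 < ρ ε :=
  eventually_mem_Ioc_F.mono fun ε hε => (hρ.1 ε hε).1

lemma Gauge.eventually_const_mul_lt_one {ρ : ℝ → ℝ} (hρ : Gauge ρ) (C : ℝ) :
    ∀ᶠ ε in F, C * ρ ε < 1 := by
  have hlim : Tendsto (fun ε => C * ρ ε) F (𝓝 0) := by
    simpa only [mul_zero] using hρ.2.const_mul C
  exact hlim.eventually (eventually_lt_nhds zero_lt_one)

lemma Ngl.of_eventually_eq_zero {ρ d : ℝ → ℝ} (hd : ∀ᶠ ε in F, d ε = 0) : Ngl ρ d :=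
  fun _ => ⟨0, hd.mono fun ε hε => by simp [hε]⟩

lemma Eqv.refl (ρ z : ℝ → ℝ) : Eqv ρ z z :=
  Ngl.of_eventually_eq_zero (Eventually.of_forall fun ε => sub_self (z ε))

lemma Ngl.sub {ρ a b : ℝ → ℝ} (ha : Ngl ρ a) (hb : Ngl ρ b) : Ngl ρ (a - b) := by
  intro N
  obtain ⟨Ca, hCa⟩ := ha N
  obtain ⟨Cb, hCb⟩ := hb N
  refine ⟨Ca + Cb, ?_⟩
  filter_upwards [hCa, hCb] with ε hεa hεb
  calc |(a - b) ε| ≤ |a ε| + |b ε| := abs_sub (a ε) (b ε)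
    _ ≤ (Ca + Cb) * ρ ε ^ N := by linarith

lemma Ngl.eventually_abs_lt_pow {ρ d : ℝ → ℝ} (hρ : Gauge ρ) (hd : Ngl ρ d) (n : ℕ) :
    ∀ᶠ ε in F, |d ε| < ρ ε ^ n := by
  obtain ⟨C, hC⟩ := hd (n + 1)
  filter_upwards [hC, hρ.eventually_const_mul_lt_one C, hρ.eventually_pos]
    with ε hdε hCε hρε
  calc |d ε| ≤ C * ρ ε ^ (n + 1) := hdε
    _ = (C * ρ ε) * ρ ε ^ n := by ring
    _ < 1 * ρ ε ^ n := by gcongr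
    _ = ρ ε ^ n := one_mul _

lemma Mod.exists_abs_le_inv_pow {ρ z : ℝ → ℝ} (hρ : Gauge ρ) (hz : Mod ρ z) :
    ∃ N : ℕ, ∀ᶠ ε in F, |z ε| ≤ (ρ ε)⁻¹ ^ N := by
  obtain ⟨N, C, hC⟩ := hz
  refine ⟨N + 1, ?_⟩
  filter_upwards [hC, hρ.eventually_const_mul_lt_one C, hρ.eventually_pos]
    with ε hzε hCε hρε
  calc |z ε| ≤ C * (ρ ε)⁻¹ ^ N := hzε
    _ = (C * ρ ε) * (ρ ε)⁻¹ ^ (N + 1) := by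
      rw [pow_succ, mul_mul_mul_comm, mul_inv_cancel₀ hρε.ne', mul_one]
    _ ≤ 1 * (ρ ε)⁻¹ ^ (N + 1) := by gcongr
    _ = (ρ ε)⁻¹ ^ (N + 1) := one_mul _

lemma invG_iff_exists_pow_lt_abs {ρ w : ℝ → ℝ} (hρ : Gauge ρ) :
    InvG ρ w ↔ ∃ m : ℕ, ∀ᶠ ε in F, ρ ε ^ m < |w ε| := by
  constructor
  · rintro ⟨z, hz, hwz⟩
    obtain ⟨N, hN⟩ := hz.exists_abs_le_inv_pow hρ
    refine ⟨N + 1, ?_⟩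
    -- `|w z - 1| < ρ < 1/2` forces `ρ < |w| |z| ≤ |w| ρ⁻ᴺ`.
    filter_upwards [hN, Ngl.eventually_abs_lt_pow hρ hwz 1, hρ.eventually_const_mul_lt_one 2,
      hρ.eventually_pos] with ε hzε hwzε h2ρε hρε
    have hρ_lt : ρ ε < |w ε| * |z ε| := by
      simp only [Pi.sub_apply, Pi.mul_apply, Pi.one_apply, pow_one, abs_lt] at hwzε
      calc ρ ε < w ε * z ε := by linarith
        _ ≤ |w ε * z ε| := le_abs_self _
        _ = |w ε| * |z ε| := abs_mul _ _
    calc ρ ε ^ (N + 1) = ρ ε * ρ ε ^ N := pow_succ' _ _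
      _ < |w ε| * |z ε| * ρ ε ^ N := by gcongr
      _ ≤ |w ε| * (ρ ε)⁻¹ ^ N * ρ ε ^ N := by gcongr
      _ = |w ε| := by rw [mul_assoc, ← mul_pow, inv_mul_cancel₀ hρε.ne', one_pow, mul_one]
  · rintro ⟨m, hm⟩
    have hw : ∀ᶠ ε in F, 0 < ρ ε ^ m ∧ ρ ε ^ m < |w ε| := by
      filter_upwards [hm, hρ.eventually_pos] with ε hmε hρε using ⟨pow_pos hρε m, hmε⟩
    refine ⟨fun ε => (w ε)⁻¹, ⟨m, 1, ?_⟩, Ngl.of_eventually_eq_zero ?_⟩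
    · filter_upwards [hw] with ε ⟨hpos, hlt⟩
      rw [abs_inv, one_mul, inv_pow]
      exact inv_anti₀ hpos hlt.le
    · filter_upwards [hw] with ε ⟨hpos, hlt⟩
      have hwε : w ε ≠ 0 := abs_pos.mp (hpos.trans hlt)
      simp [hwε]

lemma eventually_pow_succ_lt_abs_of_ngl_sub {ρ w w' : ℝ → ℝ} (hρ : Gauge ρ) {m : ℕ}
    (hw : ∀ᶠ ε in F, ρ ε ^ m < |w ε|) (hd : Ngl ρ (w' - w)) :
    ∀ᶠ ε in F, ρ ε ^ (m + 1) < |w' ε| := by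
  filter_upwards [hw, hd.eventually_abs_lt_pow hρ (m + 1), hρ.eventually_const_mul_lt_one 2,
    hρ.eventually_pos] with ε hwε hdε h2ρε hρε
  have hgap : 2 * ρ ε ^ (m + 1) < ρ ε ^ m := by
    rw [pow_succ', ← mul_assoc]
    exact mul_lt_of_lt_one_left (pow_pos hρε m) h2ρε
  have := abs_sub_abs_le_abs_sub (w ε) (w' ε)
  rw [abs_sub_comm] at this
  simp only [Pi.sub_apply] at hdε
  linarith

/-- `x < y` in `ℝ̃_ρ` iff for all representatives, `x_ε < y_ε` for ε small and moreover
`y_ε − x_ε > ρ_ε^m` for some `m` and ε small. -/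
theorem lt_iff_repr (ρ : ℝ → ℝ) (hρ : Gauge ρ)
    (x y : ℝ → ℝ) (hx : Mod ρ x) (hy : Mod ρ y) :
    ltG ρ x y ↔
      ∀ x' y', Mod ρ x' → Mod ρ y' → Eqv ρ x' x → Eqv ρ y' y →
        (∀ᶠ ε in F, x' ε < y' ε) ∧ ∃ m : ℕ, ∀ᶠ ε in F, ρ ε ^ m < y' ε - x' ε := by
  constructor
  · rintro ⟨hle, hinv⟩ x' y' hx' - hx'x hy'y
    obtain ⟨m, hm⟩ := (invG_iff_exists_pow_lt_abs hρ).mp hinv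
    have hdiff : Ngl ρ ((y' - x') - (y - x)) := sub_sub_sub_comm y' y x' x ▸ hy'y.sub hx'x
    obtain ⟨y'', -, hy''y, hx'y''⟩ := hle x' hx' hx'x
    have hy'y'' : Ngl ρ (y' - y'') := sub_sub_sub_cancel_right y' y'' y ▸ hy'y.sub hy''y
    have hpow : ∀ᶠ ε in F, ρ ε ^ (m + 1) < y' ε - x' ε := by
      filter_upwards [eventually_pow_succ_lt_abs_of_ngl_sub hρ hm hdiff,
        hy'y''.eventually_abs_lt_pow hρ (m + 1), hx'y''] with ε habs hy'y''ε hx'y''ε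
      rw [Pi.sub_apply, abs_lt] at hy'y''ε
      rw [Pi.sub_apply] at habs
      rcases lt_abs.mp habs with h | h <;> linarith
    refine ⟨?_, m + 1, hpow⟩
    filter_upwards [hpow, hρ.eventually_pos] with ε hε hρε
    linarith [pow_pos hρε (m + 1)]
  · intro h
    obtain ⟨-, m, hm⟩ := h x y hx hy (Eqv.refl ρ x) (Eqv.refl ρ y)
    refine ⟨fun x' hx' hx'x => ⟨y, hy, Eqv.refl ρ y, ?_⟩, ?_⟩
    · exact (h x' y hx' hy hx'x (Eqv.refl ρ y)).1.mono fun ε => le_of_lt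
    · exact (invG_iff_exists_pow_lt_abs hρ).mpr
        ⟨m, hm.mono fun ε hε => hε.trans_le (le_abs_self _)⟩

end RC
end
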